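/- arXiv:2504.16370 — 2 statements merged into one kernel-verified Lean document; each statement's English description precedes it below -/
import Mathlib

section
/- Let X be any type, Φ : X → ℝ^n a function, x_1,…,x_m ∈ X, and Λ ≥ 0. Define the kernel matrix K by K_{ij} = ⟨Φ(x_i), Φ(x_j)⟩. Then the empirical Rademacher complexity of the class H = {x ↦ ⟨a, Φ(x)⟩ : a ∈ ℝ^n, ‖a‖₂ ≤ Λ}, namely ℜ̂ = 2^{−m} Σ_{σ ∈ {−1,1}^m} sup_{‖a‖₂ ≤ Λ} (1/m) Σ_{i=1}^m σ_i ⟨a, Φ(x_i)⟩, satisfies ℜ̂ ≤ Λ·√(Tr K)/m, where Tr K = Σ_{i=1}^m ‖Φ(x_i)‖₂². -/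
open scoped RealInnerProductSpace

/-! On the ball of radius `Λ` the supremum of `a ↦ ⟪a, w⟫` is `Λ ‖w‖`, so the empirical Rademacher
complexity equals `Λ / m` times the mean over sign vectors `σ` of `‖∑ᵢ σᵢ Φ(xᵢ)‖`. By
Cauchy–Schwarz this mean is at most the square root of the mean of `‖∑ᵢ σᵢ Φ(xᵢ)‖²`, and that
mean square is `∑ᵢ ‖Φ(xᵢ)‖²` because distinct Rademacher signs are orthogonal. -/

open Finset

section SignVectors

variable {ι : Type*} [Fintype ι] [DecidableEq ι]

theorem sum_sign_mul_sign (i j : ι) :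
    ∑ σ : ι → Bool, (if σ i then (1 : ℝ) else -1) * (if σ j then 1 else -1)
      = if i = j then 2 ^ Fintype.card ι else 0 := by
  split_ifs with hij
  · subst hij
    have hsq (b : Bool) : (if b then (1 : ℝ) else -1) * (if b then 1 else -1) = 1 := by
      cases b <;> norm_num
    simp only [hsq, sum_const, card_univ, Fintype.card_fun, Fintype.card_bool, nsmul_eq_mul,
      mul_one, Nat.cast_pow, Nat.cast_ofNat]
  · -- flipping the `j`-th sign negates the summand and is an involution
    refine sum_involution (fun σ _ => Function.update σ j (!σ j)) (fun σ _ => ?_)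
      (fun σ _ _ h => ?_) (fun _ _ => mem_univ _) (fun σ _ => ?_)
    · simp only [Function.update_of_ne hij, Function.update_self]
      cases σ i <;> cases σ j <;> norm_num
    · have := congrFun h j
      cases hj : σ j <;> simp [hj] at this
    · simp

variable {E : Type*} [NormedAddCommGroup E] [InnerProductSpace ℝ E]

theorem sum_norm_sq_sum_sign_smul (v : ι → E) :
    ∑ σ : ι → Bool, ‖∑ i, (if σ i then (1 : ℝ) else -1) • v i‖ ^ 2
      = 2 ^ Fintype.card ι * ∑ i, ‖v i‖ ^ 2 := by
  have expand (σ : ι → Bool) : ‖∑ i, (if σ i then (1 : ℝ) else -1) • v i‖ ^ 2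
      = ∑ i, ∑ j, (if σ i then (1 : ℝ) else -1) * (if σ j then 1 else -1) * ⟪v i, v j⟫ := by
    rw [← real_inner_self_eq_norm_sq, sum_inner]
    refine sum_congr rfl fun i _ => ?_
    rw [real_inner_smul_left, inner_sum, mul_sum]
    refine sum_congr rfl fun j _ => ?_
    rw [real_inner_smul_right, mul_assoc]
  calc _ = ∑ i, ∑ j, (∑ σ : ι → Bool,
          (if σ i then (1 : ℝ) else -1) * (if σ j then 1 else -1)) * ⟪v i, v j⟫ := by
        simp only [expand, sum_mul]
        rw [sum_comm]
        exact sum_congr rfl fun i _ => sum_comm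
    _ = ∑ i, 2 ^ Fintype.card ι * ‖v i‖ ^ 2 := by
        simp only [sum_sign_mul_sign]
        simp only [ite_mul, zero_mul, sum_ite_eq, mem_univ, if_true, real_inner_self_eq_norm_sq]
    _ = _ := (mul_sum _ _ _).symm

theorem sum_norm_sum_sign_smul_le (v : ι → E) :
    ∑ σ : ι → Bool, ‖∑ i, (if σ i then (1 : ℝ) else -1) • v i‖
      ≤ 2 ^ Fintype.card ι * √(∑ i, ‖v i‖ ^ 2) := by
  have hcs := sq_sum_le_card_mul_sum_sq (s := univ)
    (f := fun σ : ι → Bool => ‖∑ i, (if σ i then (1 : ℝ) else -1) • v i‖)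
  rw [sum_norm_sq_sum_sign_smul, card_univ, Fintype.card_fun, Fintype.card_bool] at hcs
  rw [← Real.sqrt_sq (by positivity : (0 : ℝ) ≤ 2 ^ Fintype.card ι), ← Real.sqrt_mul (sq_nonneg _)]
  refine (Real.le_sqrt (sum_nonneg fun _ _ => norm_nonneg _) (by positivity)).2 ?_
  calc _ ≤ _ := hcs
    _ = _ := by push_cast; ring

end SignVectors

theorem sSup_image_inner_of_norm_le {E : Type*} [NormedAddCommGroup E] [InnerProductSpace ℝ E]
    {Λ : ℝ} (hΛ : 0 ≤ Λ) (v : E) :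
    sSup ((fun a => ⟪a, v⟫) '' {a | ‖a‖ ≤ Λ}) = Λ * ‖v‖ := by
  refine IsGreatest.csSup_eq ⟨?_, ?_⟩
  · rcases eq_or_ne v 0 with rfl | hv
    · exact ⟨0, by simpa using hΛ, by simp⟩
    · have hv' : 0 < ‖v‖ := norm_pos_iff.2 hv
      refine ⟨(Λ / ‖v‖) • v, ?_, ?_⟩
      · simp [norm_smul, abs_of_nonneg hΛ, hv'.ne']
      · simp only [real_inner_smul_left, real_inner_self_eq_norm_sq]
        field_simp
  · rintro _ ⟨a, ha, rfl⟩
    exact (real_inner_le_norm a v).trans (mul_le_mul_of_nonneg_right ha (norm_nonneg v))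

theorem rademacher_linear_class_bound_general {X : Type*} (n m : ℕ)
    (Φ : X → EuclideanSpace ℝ (Fin n)) (x : Fin m → X) (Λ : ℝ) (hΛ : 0 ≤ Λ) :
    (1 / 2 ^ m : ℝ) * ∑ σ : Fin m → Bool,
        sSup ((fun a : EuclideanSpace ℝ (Fin n) =>
            (1 / (m : ℝ)) * ∑ i, (if σ i then (1 : ℝ) else -1) * ⟪a, Φ (x i)⟫) ''
          {a | ‖a‖ ≤ Λ})
      ≤ Λ * Real.sqrt (∑ i, ‖Φ (x i)‖ ^ 2) / m := by
  have hsup (σ : Fin m → Bool) :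
      sSup ((fun a : EuclideanSpace ℝ (Fin n) =>
          (1 / (m : ℝ)) * ∑ i, (if σ i then (1 : ℝ) else -1) * ⟪a, Φ (x i)⟫) '' {a | ‖a‖ ≤ Λ})
        = Λ / m * ‖∑ i, (if σ i then (1 : ℝ) else -1) • Φ (x i)‖ := by
    have hlin : (fun a : EuclideanSpace ℝ (Fin n) =>
          (1 / (m : ℝ)) * ∑ i, (if σ i then (1 : ℝ) else -1) * ⟪a, Φ (x i)⟫)
        = fun a => ⟪a, (1 / (m : ℝ)) • ∑ i, (if σ i then (1 : ℝ) else -1) • Φ (x i)⟫ := by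
      ext a
      simp only [real_inner_smul_right, inner_sum]
    rw [hlin, sSup_image_inner_of_norm_le hΛ, norm_smul, Real.norm_of_nonneg (by positivity)]
    ring
  have hbound := sum_norm_sum_sign_smul_le (fun i => Φ (x i))
  rw [Fintype.card_fin] at hbound
  calc _ = Λ / m * ((1 / 2 ^ m) * ∑ σ : Fin m → Bool,
          ‖∑ i, (if σ i then (1 : ℝ) else -1) • Φ (x i)‖) := by
        simp only [hsup, ← mul_sum]
        ring
    _ ≤ Λ / m * ((1 / 2 ^ m) * (2 ^ m * √(∑ i, ‖Φ (x i)‖ ^ 2))) := by gcongr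
    _ = Λ * √(∑ i, ‖Φ (x i)‖ ^ 2) / m := by field_simp

/-- Corollary 4 of the paper. The empirical Rademacher complexity of the class
of linear functions `x ↦ ⟨a, Φ(x)⟩` with `‖a‖₂ ≤ Λ` with respect to a sample `x_1, …, x_m` is at
most `Λ·√(Tr K)/m`, where `Tr K = ∑ᵢ ‖Φ(xᵢ)‖²` is the trace of the kernel matrix
`K_{ij} = ⟨Φ(xᵢ), Φ(x_j)⟩`. -/
theorem rademacher_linear_class_bound {X : Type*} (n m : ℕ) (hm : 1 ≤ m)
    (Φ : X → EuclideanSpace ℝ (Fin n)) (x : Fin m → X) (Λ : ℝ) (hΛ : 0 ≤ Λ) :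
    (1 / 2 ^ m : ℝ) * ∑ σ : Fin m → Bool,
        sSup ((fun a : EuclideanSpace ℝ (Fin n) =>
            (1 / (m : ℝ)) * ∑ i, (if σ i then (1 : ℝ) else -1) * ⟪a, Φ (x i)⟫) ''
          {a | ‖a‖ ≤ Λ})
      ≤ Λ * Real.sqrt (∑ i, ‖Φ (x i)‖ ^ 2) / m :=
  rademacher_linear_class_bound_general n m Φ x Λ hΛ
end

section
/- Let V be a finite-dimensional complex inner product space, H : V → V a self-adjoint linear operator, λ ∈ ℝ, t ∈ ℝ, and let ψ_ref, ψ ∈ V be unit vectors with Hψ_ref = λψ_ref and ⟨ψ_ref, ψ⟩ = 0. Set U = exp(−itH), ψ_± = (ψ_ref ± ψ)/√2, ψ_{±i} = (ψ_ref ± iψ)/√2, w_± = |⟨ψ_±, Uψ_+⟩|², and w_{±i} = |⟨ψ_{±i}, Uψ_+⟩|². Then ⟨ψ, Uψ⟩ = (w_+ − w_− + i(w_{+i} − w_{−i}))·e^{−iλt}; equivalently, for ρ = |ψ⟩⟨ψ| the rank-one projection onto ψ, Tr[Uρ] = (w_+ − w_− + i(w_{+i} − w_{−i}))·e^{−iλt}.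 -/
/-!
Since `ψref` is an eigenvector of the self-adjoint `H`, it is an eigenvector of both `U` (with
eigenvalue `e = exp(-iλt)`) and `U*`, so `U` maps `ψref^⊥` into itself and `⟪ψref, Uψ⟫ = 0`.
Hence `⟪(ψref + cψ)/√2, Uψ_+⟫ = (e + c̄⟪ψ, Uψ⟫)/2`, and the four weights are exactly the
squared moduli in the polarization identity for `ē⟪ψ, Uψ⟫`. Since `|e| = 1`, multiplying by `e`
recovers `⟪ψ, Uψ⟫`.
-/

open scoped ComplexInnerProductSpace

theorem NormedSpace.exp_apply_of_apply_eq_smul {𝕂 E : Type*} [RCLike 𝕂] [NormedAddCommGroup E]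
    [NormedSpace 𝕂 E] [CompleteSpace E] {A : E →L[𝕂] E} {μ : 𝕂} {v : E} (h : A v = μ • v) :
    NormedSpace.exp A v = NormedSpace.exp μ • v := by
  have hpow : ∀ n : ℕ, (A ^ n) v = μ ^ n • v := by
    intro n
    induction n with
    | zero => simp
    | succ n ih =>
      rw [pow_succ', mul_apply_eq_comp, ih, map_smul, h, smul_smul, pow_succ]
  have hA := (NormedSpace.exp_series_hasSum_exp' (𝕂 := 𝕂) A).mapL
    (ContinuousLinearMap.apply 𝕂 E v)
  have hμ := (NormedSpace.exp_series_hasSum_exp' (𝕂 := 𝕂) μ).smul_const v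
  refine hA.unique ?_
  simpa [hpow, smul_smul] using hμ

open scoped InnerProductSpace in
theorem IsSelfAdjoint.inner_exp_smul_apply_eq_zero {𝕜 E : Type*} [RCLike 𝕜]
    [NormedAddCommGroup E] [InnerProductSpace 𝕜 E] [CompleteSpace E] {H : E →L[𝕜] E}
    (hH : IsSelfAdjoint H) {lam : ℝ} {u w : E} (hu : H u = (lam : 𝕜) • u)
    (huw : ⟪u, w⟫_𝕜 = 0) (c : 𝕜) : ⟪u, NormedSpace.exp (c • H) w⟫_𝕜 = 0 := by
  have hstar : (star (c • H)) u = (star c * lam) • u := by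
    rw [star_smul, hH.star_eq, smul_apply, hu, smul_smul]
  rw [← ContinuousLinearMap.adjoint_inner_left, ← ContinuousLinearMap.star_eq_adjoint,
    NormedSpace.star_exp, NormedSpace.exp_apply_of_apply_eq_smul hstar, inner_smul_left, huw,
    mul_zero]

theorem inner_inv_sqrt_two_smul_add_smul_apply {V : Type*} [NormedAddCommGroup V]
    [InnerProductSpace ℂ V] {U : V →L[ℂ] V} {u w : V} {e : ℂ} (hu : ‖u‖ = 1) (hUu : U u = e • u)
    (huw : ⟪u, w⟫ = 0) (huUw : ⟪u, U w⟫ = 0) (c : ℂ) :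
    ⟪((Real.sqrt 2 : ℂ))⁻¹ • (u + c • w), U (((Real.sqrt 2 : ℂ))⁻¹ • (u + w))⟫
      = (e + starRingEnd ℂ c * ⟪w, U w⟫) / 2 := by
  have hwu : ⟪w, u⟫ = 0 := by rw [← inner_conj_symm, huw, map_zero]
  have huu : ⟪u, u⟫ = 1 := by rw [inner_self_eq_norm_sq_to_K, hu]; norm_num
  have hsqrt : starRingEnd ℂ ((Real.sqrt 2 : ℂ))⁻¹ * ((Real.sqrt 2 : ℂ))⁻¹ = 1 / 2 := by
    rw [map_inv₀, Complex.conj_ofReal, ← mul_inv, ← Complex.ofReal_mul,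
      Real.mul_self_sqrt zero_le_two]
    norm_num
  rw [map_smul, inner_smul_left, inner_smul_right, ← mul_assoc, hsqrt, map_add, inner_add_left,
    inner_add_right, inner_add_right, inner_smul_left, inner_smul_left, hUu, inner_smul_right,
    inner_smul_right, huu, hwu, huUw]
  ring

theorem Complex.conj_mul_eq_polarization (a b : ℂ) :
    starRingEnd ℂ a * b = ((‖(a + b) / 2‖ ^ 2 - ‖(a - b) / 2‖ ^ 2 : ℝ) : ℂ)
      + I * ((‖(a - I * b) / 2‖ ^ 2 - ‖(a + I * b) / 2‖ ^ 2 : ℝ) : ℂ) := by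
  have h := inner_eq_sum_norm_sq_div_four (𝕜 := ℂ) a b
  simp only [RCLike.inner_apply, RCLike.I_to_complex, smul_eq_mul,
    RCLike.ofReal_eq_complex_ofReal] at h
  rw [mul_comm, h, norm_div, norm_div, norm_div, norm_div, Complex.norm_ofNat]
  push_cast
  ring

theorem trace_comp_innerSL_smulRight_self {𝕜 E : Type*} [RCLike 𝕜] [NormedAddCommGroup E]
    [InnerProductSpace 𝕜 E] [FiniteDimensional 𝕜 E] (A : E →L[𝕜] E) (x : E) :
    LinearMap.trace 𝕜 E (A.toLinearMap ∘ₗ ((innerSL 𝕜 x).smulRight x).toLinearMap)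
      = inner 𝕜 x (A x) := by
  rw [← ContinuousLinearMap.toLinearMap_comp, ← InnerProductSpace.rankOne_def,
    InnerProductSpace.comp_rankOne, InnerProductSpace.trace_rankOne]

theorem feature_extractor_general
    {V : Type*} [NormedAddCommGroup V] [InnerProductSpace ℂ V] [FiniteDimensional ℂ V]
    (H : V →L[ℂ] V) (hH : IsSelfAdjoint H) (lam t : ℝ)
    (ψref ψ : V) (hψref : ‖ψref‖ = 1)
    (heig : H ψref = (lam : ℂ) • ψref) (horth : ⟪ψref, ψ⟫ = 0)
    (U : V →L[ℂ] V) (hU : U = NormedSpace.exp ((-(t : ℂ) * Complex.I) • H))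
    (ψp ψm ψpi ψmi : V)
    (hψp : ψp = ((Real.sqrt 2 : ℂ))⁻¹ • (ψref + ψ))
    (hψm : ψm = ((Real.sqrt 2 : ℂ))⁻¹ • (ψref - ψ))
    (hψpi : ψpi = ((Real.sqrt 2 : ℂ))⁻¹ • (ψref + Complex.I • ψ))
    (hψmi : ψmi = ((Real.sqrt 2 : ℂ))⁻¹ • (ψref - Complex.I • ψ))
    (wp wm wpi wmi : ℝ)
    (hwp : wp = ‖⟪ψp, U ψp⟫‖ ^ 2) (hwm : wm = ‖⟪ψm, U ψp⟫‖ ^ 2)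
    (hwpi : wpi = ‖⟪ψpi, U ψp⟫‖ ^ 2) (hwmi : wmi = ‖⟪ψmi, U ψp⟫‖ ^ 2) :
    ⟪ψ, U ψ⟫ =
        (((wp - wm : ℝ) : ℂ) + Complex.I * ((wpi - wmi : ℝ) : ℂ))
          * Complex.exp (-(Complex.I) * (lam : ℂ) * (t : ℂ)) ∧
    LinearMap.trace ℂ V (U.toLinearMap ∘ₗ ((innerSL ℂ ψ).smulRight ψ).toLinearMap) =
        (((wp - wm : ℝ) : ℂ) + Complex.I * ((wpi - wmi : ℝ) : ℂ))
          * Complex.exp (-(Complex.I) * (lam : ℂ) * (t : ℂ)) := by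
  set e := Complex.exp (-(Complex.I) * (lam : ℂ) * (t : ℂ))
  have hUref : U ψref = e • ψref := by
    rw [hU, NormedSpace.exp_apply_of_apply_eq_smul (μ := -(t : ℂ) * Complex.I * lam)
      (by rw [smul_apply, heig, smul_smul]), ← Complex.exp_eq_exp_ℂ]
    congr 2
    ring
  have hUψ : ⟪ψref, U ψ⟫ = 0 := hU ▸ hH.inner_exp_smul_apply_eq_zero heig horth _
  have hsup := inner_inv_sqrt_two_smul_add_smul_apply hψref hUref horth hUψ
  have hp := hsup 1
  have hm := hsup (-1)
  have hpi := hsup Complex.I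
  have hmi := hsup (-Complex.I)
  simp only [one_smul, neg_smul, ← sub_eq_add_neg, map_one, map_neg, Complex.conj_I, one_mul,
    neg_mul, neg_neg] at hp hm hpi hmi
  have he : starRingEnd ℂ e * e = 1 := by
    rw [Complex.conj_mul', Complex.norm_exp]
    simp
  have hd : ⟪ψ, U ψ⟫ = (((wp - wm : ℝ) : ℂ) + Complex.I * ((wpi - wmi : ℝ) : ℂ)) * e := by
    rw [hwp, hwm, hwpi, hwmi, hψp, hψm, hψpi, hψmi, hp, hm, hpi, hmi,
      ← Complex.conj_mul_eq_polarization, mul_right_comm, he, one_mul]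
  exact ⟨hd, by rw [trace_comp_innerSL_smulRight_self, hd]⟩

/-- Eq. (8) of the paper. For a self-adjoint `H`, an eigenvector `ψ_ref` with
eigenvalue `λ` orthogonal to a unit vector `ψ`, with `U = exp(-itH)`,
`ψ_± = (ψ_ref ± ψ)/√2`, `ψ_{±i} = (ψ_ref ± iψ)/√2`, `w_± = |⟪ψ_±, Uψ_+⟫|²`,
`w_{±i} = |⟪ψ_{±i}, Uψ_+⟫|²`, one has
`⟪ψ, Uψ⟫ = (w_+ - w_- + i(w_{+i} - w_{-i}))·e^{-iλt}`; equivalently, the same formula holds for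
`Tr[Uρ]` with `ρ = |ψ⟩⟨ψ|` the rank-one projection `v ↦ ⟪ψ, v⟫ • ψ`. -/
theorem feature_extractor
    {V : Type*} [NormedAddCommGroup V] [InnerProductSpace ℂ V] [FiniteDimensional ℂ V]
    (H : V →L[ℂ] V) (hH : IsSelfAdjoint H) (lam t : ℝ)
    (ψref ψ : V) (hψref : ‖ψref‖ = 1) (hψ : ‖ψ‖ = 1)
    (heig : H ψref = (lam : ℂ) • ψref) (horth : ⟪ψref, ψ⟫ = 0)
    (U : V →L[ℂ] V) (hU : U = NormedSpace.exp ((-(t : ℂ) * Complex.I) • H))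
    (ψp ψm ψpi ψmi : V)
    (hψp : ψp = ((Real.sqrt 2 : ℂ))⁻¹ • (ψref + ψ))
    (hψm : ψm = ((Real.sqrt 2 : ℂ))⁻¹ • (ψref - ψ))
    (hψpi : ψpi = ((Real.sqrt 2 : ℂ))⁻¹ • (ψref + Complex.I • ψ))
    (hψmi : ψmi = ((Real.sqrt 2 : ℂ))⁻¹ • (ψref - Complex.I • ψ))
    (wp wm wpi wmi : ℝ)
    (hwp : wp = ‖⟪ψp, U ψp⟫‖ ^ 2) (hwm : wm = ‖⟪ψm, U ψp⟫‖ ^ 2)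
    (hwpi : wpi = ‖⟪ψpi, U ψp⟫‖ ^ 2) (hwmi : wmi = ‖⟪ψmi, U ψp⟫‖ ^ 2) :
    ⟪ψ, U ψ⟫ =
        (((wp - wm : ℝ) : ℂ) + Complex.I * ((wpi - wmi : ℝ) : ℂ))
          * Complex.exp (-(Complex.I) * (lam : ℂ) * (t : ℂ)) ∧
    LinearMap.trace ℂ V (U.toLinearMap ∘ₗ ((innerSL ℂ ψ).smulRight ψ).toLinearMap) =
        (((wp - wm : ℝ) : ℂ) + Complex.I * ((wpi - wmi : ℝ) : ℂ))
          * Complex.exp (-(Complex.I) * (lam : ℂ) * (t : ℂ)) :=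
  feature_extractor_general H hH lam t ψref ψ hψref heig horth U hU ψp ψm ψpi ψmi hψp hψm hψpi hψmi
    wp wm wpi wmi hwp hwm hwpi hwmi
end
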